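/- Assume condition (exp). Then there exist a constant C > 0 and N such that 0 ≤ σ_n − σ_{n+1} ≤ C δ_n^{r+2} for all n ≥ N. -/

import Mathlib

/-!
Write `δ = σ - log y`. Since `y^j e^{-jσ} = e^{-jδ}`, condition (exp) squeezes `M_n(σ)` between
`D₁ Σ_{j ≤ n} j^r e^{-jδ}` and `D₂ (1 + 1/δ)` times the same sum. Evaluated at `σ = σ_n`, where
`M_n = n`, this forces `0 < δ_n ≤ 1` and `e^{n δ_n / 2} ≳ n^r` for large `n`; in particular the term
that `M_{n+1}(σ_n)` adds to `M_n(σ_n) = n` is at most `1`, so `M_{n+1}(σ_n) ≤ M_{n+1}(σ_{n+1})` and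
`σ_{n+1} ≤ σ_n` because `M_{n+1}` is decreasing.

Quantitatively, `e^{-x}/(1 - e^{-x})` decreases with slope at least `e^{-x}`, so
`(σ_n - σ_{n+1}) Σ_{j ≤ n} j² a_j e^{-jσ_n} ≤ M_n(σ_{n+1}) - M_n(σ_n) ≤ 1`, and the block
`1/δ_n ≤ j ≤ 2/δ_n` already makes that sum `≳ δ_n^{-(r+2)}`.
-/

open Finset Filter

/-- The number of multisets of total size `n` determined by the parameters `a j`
(the number of one-component multisets of size `j`), i.e.
`c_n = Σ_{η ∈ Ω_n} Π_{j=1}^n C(a_j + η_j - 1, η_j)` where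
`Ω_n = {η : Σ_{j=1}^n j·η_j = n}` (indices shifted: `j ∈ Fin n` stands for `j+1`). -/
def multisetCount (a : ℕ → ℕ) (n : ℕ) : ℕ :=
  ∑ η : Fin n → Fin (n + 1),
    if ∑ j : Fin n, (j.1 + 1) * (η j).1 = n then
      ∏ j : Fin n, Nat.choose (a (j.1 + 1) + (η j).1 - 1) (η j).1
    else 0

/-- `M_n(σ) = Σ_{j=1}^n j a_j e^{-jσ}/(1-e^{-jσ})`. -/
noncomputable def Mfun (a : ℕ → ℕ) (n : ℕ) (σ : ℝ) : ℝ :=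
  ∑ j ∈ Finset.Icc 1 n, (j : ℝ) * (a j) * Real.exp (-(j * σ)) / (1 - Real.exp (-(j * σ)))

/-- Condition (exp): `a_j ≍ j^{r-1} y^j`, i.e. there are constants `D₁, D₂ > 0` with
`D₁ j^{r-1} y^j ≤ a_j ≤ D₂ j^{r-1} y^j` for all `j ≥ 1`. -/
def ExpansiveCond (a : ℕ → ℕ) (r y : ℝ) : Prop :=
  ∃ D₁ D₂ : ℝ, 0 < D₁ ∧ 0 < D₂ ∧ ∀ j : ℕ, 1 ≤ j →
    D₁ * (j : ℝ) ^ (r - 1) * y ^ j ≤ (a j : ℝ) ∧ (a j : ℝ) ≤ D₂ * (j : ℝ) ^ (r - 1) * y ^ j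

open Real

lemma one_sub_exp_neg_pos {x : ℝ} (hx : 0 < x) : 0 < 1 - exp (-x) := by
  linarith [exp_lt_one_iff.mpr (neg_lt_zero.mpr hx)]

lemma inv_one_sub_exp_neg_le {x : ℝ} (hx : 0 < x) : (1 - exp (-x))⁻¹ ≤ 1 + 1 / x := by
  have hexp : exp (-x) ≤ (1 + x)⁻¹ := by
    rw [exp_neg]
    exact inv_anti₀ (by positivity) (by linarith [add_one_le_exp x])
  have hsplit : x / (1 + x) = 1 - (1 + x)⁻¹ := by field_simp; ring
  calc (1 - exp (-x))⁻¹ ≤ (x / (1 + x))⁻¹ := inv_anti₀ (by positivity) (by linarith)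
    _ = 1 + 1 / x := by field_simp; ring

lemma exp_neg_div_one_sub_exp_neg {x : ℝ} (hx : 0 < x) :
    exp (-x) / (1 - exp (-x)) = 1 / (exp x - 1) := by
  have : exp x - 1 ≠ 0 := by linarith [one_lt_exp_iff.mpr hx]
  rw [exp_neg]
  field_simp

lemma sub_mul_exp_neg_le {x' x : ℝ} (hx' : 0 < x') (h : x' ≤ x) :
    (x - x') * exp (-x) ≤ exp (-x') / (1 - exp (-x')) - exp (-x) / (1 - exp (-x)) := by
  have hA : 1 < exp x' := one_lt_exp_iff.mpr hx'
  have hB : exp x' * (x - x' + 1) ≤ exp x := by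
    rw [show x = x' + (x - x') by ring, exp_add, add_sub_cancel_left]
    gcongr
    linarith [add_one_le_exp (x - x')]
  have hd : 0 ≤ x - x' := by linarith
  have hB1 : 1 < exp x := hA.trans_le (exp_le_exp.mpr h)
  rw [exp_neg_div_one_sub_exp_neg hx', exp_neg_div_one_sub_exp_neg (hx'.trans_le h), exp_neg,
    div_sub_div _ _ (by linarith) (by linarith), ← div_eq_mul_inv,
    div_le_div_iff₀ (by positivity) (by nlinarith)]
  nlinarith [mul_le_mul_of_nonneg_right hB (by positivity : 0 ≤ (x - x') * exp x),
    mul_nonneg hd (by linarith : 0 ≤ exp x' + exp x - 1)]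

noncomputable def powExpSum (s : ℝ) (n : ℕ) (δ : ℝ) : ℝ :=
  ∑ j ∈ Icc 1 n, (j : ℝ) ^ s * exp (-(j * δ))

lemma powExpSum_antitone (s : ℝ) (n : ℕ) : Antitone (powExpSum s n) := by
  intro δ δ' h
  unfold powExpSum
  gcongr with j

lemma bddAbove_range_powExpSum_one (s : ℝ) : BddAbove (Set.range fun n ↦ powExpSum s n 1) := by
  have hsum := summable_pow_mul_exp_neg_nat_mul ⌈s⌉₊ one_pos
  refine ⟨∑' j : ℕ, (j : ℝ) ^ ⌈s⌉₊ * exp (-1 * j), ?_⟩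
  rintro _ ⟨n, rfl⟩
  calc powExpSum s n 1 ≤ ∑ j ∈ Icc 1 n, (j : ℝ) ^ ⌈s⌉₊ * exp (-1 * j) := by
        refine sum_le_sum fun j hj ↦ ?_
        have hj : (1 : ℝ) ≤ j := by exact_mod_cast (mem_Icc.mp hj).1
        rw [← rpow_natCast, mul_one, neg_one_mul]
        gcongr
        exact Nat.le_ceil s
    _ ≤ _ := hsum.sum_le_tsum _ fun j _ ↦ by positivity

lemma powExpSum_ge_block {s δ : ℝ} (hs : 0 ≤ s) (hδ : 0 ≤ δ) {m n : ℕ} (hm : 1 ≤ m)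
    (hmn : 2 * m ≤ n) : (m + 1) * (m : ℝ) ^ s * exp (-(2 * m * δ)) ≤ powExpSum s n δ := by
  have hsub : Icc m (2 * m) ⊆ Icc 1 n := Icc_subset_Icc hm hmn
  calc (m + 1) * (m : ℝ) ^ s * exp (-(2 * m * δ))
      = #(Icc m (2 * m)) • ((m : ℝ) ^ s * exp (-(2 * m * δ))) := by
        rw [Nat.card_Icc, nsmul_eq_mul, show 2 * m + 1 - m = m + 1 by omega]
        push_cast; ring
    _ ≤ ∑ j ∈ Icc m (2 * m), (j : ℝ) ^ s * exp (-(j * δ)) := by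
        refine card_nsmul_le_sum _ _ _ fun j hj ↦ ?_
        obtain ⟨hmj, hj2m⟩ := mem_Icc.mp hj
        gcongr
        exact_mod_cast hj2m
    _ ≤ powExpSum s n δ :=
        sum_le_sum_of_subset_of_nonneg hsub fun j _ _ ↦ by positivity

lemma powExpSum_ge_of_four_le {s δ : ℝ} (hs : 0 ≤ s) (hδ : 0 ≤ δ) {n : ℕ} (hn : 4 ≤ n) :
    ((n : ℝ) / 8) ^ (s + 1) * exp (-(n * δ / 2)) ≤ powExpSum s n δ := by
  set m := n / 4
  have hm : 1 ≤ m := by omega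
  have hm8 : (n : ℝ) / 8 ≤ m := by
    rw [div_le_iff₀ (by norm_num)]; exact_mod_cast (by omega : n ≤ m * 8)
  have hm2 : 2 * (m : ℝ) ≤ n / 2 := by
    rw [le_div_iff₀ (by norm_num)]; exact_mod_cast (by omega : 2 * m * 2 ≤ n)
  refine le_trans ?_ (powExpSum_ge_block hs hδ hm (by omega))
  rw [rpow_add_one (by positivity), mul_comm (((n : ℝ) / 8) ^ s)]
  gcongr
  · linarith
  · nlinarith

lemma powExpSum_ge_of_four_le_mul {s δ : ℝ} (hs : 0 ≤ s) (hδ : 0 < δ) (hδ1 : δ ≤ 1) {n : ℕ}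
    (hn : 4 ≤ n * δ) : exp (-4) ≤ δ ^ (s + 1) * powExpSum s n δ := by
  set m := ⌈δ⁻¹⌉₊
  have hm : δ⁻¹ ≤ m := Nat.le_ceil _
  have hm' : (m : ℝ) < δ⁻¹ + 1 := Nat.ceil_lt_add_one (by positivity)
  have hm1 : 1 ≤ m := Nat.one_le_ceil_iff.mpr (by positivity)
  have hδm : 1 ≤ δ * m := by rwa [inv_le_iff_one_le_mul₀' hδ] at hm
  have hmn : 2 * m ≤ n := by
    have h4n : 4 / δ ≤ n := (div_le_iff₀ hδ).mpr hn
    have hδinv : 1 ≤ δ⁻¹ := one_le_inv₀ hδ |>.mpr hδ1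
    have : 2 * (m : ℝ) ≤ n := by rw [div_eq_mul_inv] at h4n; linarith
    exact_mod_cast this
  calc exp (-4) = 1 * 1 * exp (-4) := by ring
    _ ≤ (δ * (m + 1)) * (δ * m) ^ s * exp (-(2 * m * δ)) := by
        gcongr
        · nlinarith
        · exact one_le_rpow hδm hs
        · nlinarith [mul_lt_mul_of_pos_left hm' hδ, mul_inv_cancel₀ hδ.ne']
    _ = δ ^ (s + 1) * ((m + 1) * (m : ℝ) ^ s * exp (-(2 * m * δ))) := by
        rw [rpow_add_one hδ.ne', mul_rpow hδ.le (by positivity)]; ring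
    _ ≤ δ ^ (s + 1) * powExpSum s n δ := by
        gcongr
        exact powExpSum_ge_block hs hδ.le hm1 hmn

section Mfun

variable {a : ℕ → ℕ} {r y σ : ℝ}

lemma natCast_mul_rpow_mul_pow_mul_exp_neg (D : ℝ) (hy : 0 < y) {j : ℕ} (hj : 1 ≤ j) :
    (j : ℝ) * (D * (j : ℝ) ^ (r - 1) * y ^ j) * exp (-(j * σ)) =
      D * (j : ℝ) ^ r * exp (-(j * (σ - log y))) := by
  have hj0 : (j : ℝ) ≠ 0 := by positivity
  rw [← exp_log hy, ← exp_nat_mul, log_exp, rpow_sub_one hj0,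
    show -(j * (σ - log y)) = j * log y + -(j * σ) by ring, exp_add]
  field_simp

lemma Mfun_term_ge {D₁ : ℝ} (hy : 0 < y) {j : ℕ} (hj : 1 ≤ j) (hσ : 0 < σ)
    (ha : D₁ * (j : ℝ) ^ (r - 1) * y ^ j ≤ a j) :
    D₁ * (j : ℝ) ^ r * exp (-(j * (σ - log y))) ≤
      j * a j * exp (-(j * σ)) / (1 - exp (-(j * σ))) := by
  have hjσ : 0 < (j : ℝ) * σ := by positivity
  rw [← natCast_mul_rpow_mul_pow_mul_exp_neg D₁ hy hj]
  calc (j : ℝ) * (D₁ * (j : ℝ) ^ (r - 1) * y ^ j) * exp (-(j * σ))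
      ≤ j * a j * exp (-(j * σ)) := by gcongr
    _ ≤ j * a j * exp (-(j * σ)) / (1 - exp (-(j * σ))) :=
        le_div_self (by positivity) (one_sub_exp_neg_pos hjσ) (by linarith [exp_pos (-(j * σ))])

lemma Mfun_term_le {D₂ : ℝ} (hy : 1 ≤ y) {j : ℕ} (hj : 1 ≤ j) (hδ : 0 < σ - log y)
    (ha : a j ≤ D₂ * (j : ℝ) ^ (r - 1) * y ^ j) :
    j * a j * exp (-(j * σ)) / (1 - exp (-(j * σ))) ≤
      D₂ * (j : ℝ) ^ r * exp (-(j * (σ - log y))) * (1 + 1 / (j * (σ - log y))) := by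
  have hjδ : 0 < (j : ℝ) * (σ - log y) := by positivity
  have hjσ : (j : ℝ) * (σ - log y) ≤ j * σ := by
    have := log_nonneg hy
    gcongr; linarith
  calc j * a j * exp (-(j * σ)) / (1 - exp (-(j * σ)))
      = j * a j * exp (-(j * σ)) * (1 - exp (-(j * σ)))⁻¹ := div_eq_mul_inv _ _
    _ ≤ j * a j * exp (-(j * σ)) * (1 + 1 / (j * (σ - log y))) := by
        gcongr
        calc (1 - exp (-(j * σ)))⁻¹ ≤ 1 + 1 / (j * σ) := inv_one_sub_exp_neg_le (hjδ.trans_le hjσ)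
          _ ≤ 1 + 1 / (j * (σ - log y)) := by gcongr
    _ ≤ j * (D₂ * (j : ℝ) ^ (r - 1) * y ^ j) * exp (-(j * σ)) * (1 + 1 / (j * (σ - log y))) := by
        gcongr
    _ = D₂ * (j : ℝ) ^ r * exp (-(j * (σ - log y))) * (1 + 1 / (j * (σ - log y))) := by
        rw [natCast_mul_rpow_mul_pow_mul_exp_neg D₂ (by positivity) hj]

lemma Mfun_term_succ_le {D₂ : ℝ} (hr : 0 ≤ r) (hD₂ : 0 ≤ D₂) (hy : 1 ≤ y) {n : ℕ} (hn : 1 ≤ n)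
    (hδ : 0 < σ - log y) (hnδ : 1 ≤ n * (σ - log y))
    (ha : a (n + 1) ≤ D₂ * ((n + 1 : ℕ) : ℝ) ^ (r - 1) * y ^ (n + 1)) :
    (n + 1 : ℕ) * a (n + 1) * exp (-((n + 1 : ℕ) * σ)) / (1 - exp (-((n + 1 : ℕ) * σ))) ≤
      2 ^ (r + 1) * D₂ * (n : ℝ) ^ r * exp (-(n * (σ - log y) / 2)) ^ 2 := by
  have hn1 : (1 : ℝ) ≤ n := by exact_mod_cast hn
  calc _ ≤ D₂ * ((n + 1 : ℕ) : ℝ) ^ r * exp (-((n + 1 : ℕ) * (σ - log y))) *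
        (1 + 1 / ((n + 1 : ℕ) * (σ - log y))) := Mfun_term_le hy (by omega) hδ ha
    _ ≤ D₂ * (2 ^ r * (n : ℝ) ^ r) * exp (-(n * (σ - log y) / 2)) ^ 2 * 2 := by
        push_cast
        gcongr
        · rw [← mul_rpow (by norm_num) (by positivity)]
          gcongr
          linarith
        · rw [sq, ← exp_add]
          gcongr
          nlinarith
        · have : 1 / ((n + 1) * (σ - log y)) ≤ 1 := by
            rw [div_le_one (by positivity)]; nlinarith
          linarith
    _ = 2 ^ (r + 1) * D₂ * (n : ℝ) ^ r * exp (-(n * (σ - log y) / 2)) ^ 2 := by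
        rw [rpow_add_one (by norm_num)]; ring

lemma Mfun_ge_mul_powExpSum {D₁ : ℝ} (hy : 0 < y) (hσ : 0 < σ)
    (ha : ∀ j : ℕ, 1 ≤ j → D₁ * (j : ℝ) ^ (r - 1) * y ^ j ≤ a j) (n : ℕ) :
    D₁ * powExpSum r n (σ - log y) ≤ Mfun a n σ := by
  rw [powExpSum, mul_sum]
  refine sum_le_sum fun j hj ↦ ?_
  rw [← mul_assoc]
  exact Mfun_term_ge hy (mem_Icc.mp hj).1 hσ (ha j (mem_Icc.mp hj).1)

lemma Mfun_le_mul_powExpSum {D₂ : ℝ} (hD₂ : 0 ≤ D₂) (hy : 1 ≤ y) (hδ : 0 < σ - log y)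
    (ha : ∀ j : ℕ, 1 ≤ j → a j ≤ D₂ * (j : ℝ) ^ (r - 1) * y ^ j) (n : ℕ) :
    Mfun a n σ ≤ D₂ * (1 + 1 / (σ - log y)) * powExpSum r n (σ - log y) := by
  rw [powExpSum, mul_sum]
  refine sum_le_sum fun j hj ↦ ?_
  have hj : 1 ≤ j := (mem_Icc.mp hj).1
  calc _ ≤ D₂ * (j : ℝ) ^ r * exp (-(j * (σ - log y))) * (1 + 1 / (j * (σ - log y))) :=
        Mfun_term_le hy hj hδ (ha j hj)
    _ ≤ D₂ * (j : ℝ) ^ r * exp (-(j * (σ - log y))) * (1 + 1 / (σ - log y)) := by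
        gcongr
        exact le_mul_of_one_le_left hδ.le (by exact_mod_cast hj)
    _ = _ := by ring

lemma powExpSum_le_sum_sq_mul {D₁ : ℝ} (hy : 0 < y)
    (ha : ∀ j : ℕ, 1 ≤ j → D₁ * (j : ℝ) ^ (r - 1) * y ^ j ≤ a j) (n : ℕ) :
    D₁ * powExpSum (r + 1) n (σ - log y) ≤ ∑ j ∈ Icc 1 n, (j : ℝ) ^ 2 * a j * exp (-(j * σ)) := by
  rw [powExpSum, mul_sum]
  refine sum_le_sum fun j hj ↦ ?_
  have hj : 1 ≤ j := (mem_Icc.mp hj).1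
  calc D₁ * ((j : ℝ) ^ (r + 1) * exp (-(j * (σ - log y))))
      = j * ((j : ℝ) * (D₁ * (j : ℝ) ^ (r - 1) * y ^ j) * exp (-(j * σ))) := by
        rw [natCast_mul_rpow_mul_pow_mul_exp_neg D₁ hy hj, rpow_add_one (by positivity)]; ring
    _ ≤ j * (j * a j * exp (-(j * σ))) := by gcongr; exact ha j hj
    _ = (j : ℝ) ^ 2 * a j * exp (-(j * σ)) := by ring

lemma sub_mul_sum_sq_le_Mfun_sub {σ' : ℝ} (hσ' : 0 < σ') (h : σ' ≤ σ) (n : ℕ) :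
    (σ - σ') * ∑ j ∈ Icc 1 n, (j : ℝ) ^ 2 * a j * exp (-(j * σ)) ≤ Mfun a n σ' - Mfun a n σ := by
  rw [Mfun, Mfun, ← sum_sub_distrib, mul_sum]
  refine sum_le_sum fun j hj ↦ ?_
  have hj : (1 : ℝ) ≤ j := by exact_mod_cast (mem_Icc.mp hj).1
  simp only [mul_div_assoc, ← mul_sub]
  calc (σ - σ') * ((j : ℝ) ^ 2 * a j * exp (-(j * σ)))
      = j * a j * ((j * σ - j * σ') * exp (-(j * σ))) := by ring
    _ ≤ _ := by
        gcongr
        exact sub_mul_exp_neg_le (by positivity) (by gcongr)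

lemma Mfun_strictAntiOn (ha : 0 < a 1) {n : ℕ} (hn : 1 ≤ n) :
    StrictAntiOn (Mfun a n) (Set.Ioi 0) := by
  intro σ' hσ' σ _ h
  have hsum : 0 < ∑ j ∈ Icc 1 n, (j : ℝ) ^ 2 * a j * exp (-(j * σ)) :=
    sum_pos' (fun j _ ↦ by positivity) ⟨1, mem_Icc.mpr ⟨le_rfl, hn⟩, by simp [ha, exp_pos]⟩
  have := sub_mul_sum_sq_le_Mfun_sub (a := a) hσ' h.le n
  nlinarith [mul_pos (sub_pos.mpr h) hsum]

lemma Mfun_succ (n : ℕ) : Mfun a (n + 1) σ = Mfun a n σ +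
    (n + 1 : ℕ) * a (n + 1) * exp (-((n + 1 : ℕ) * σ)) / (1 - exp (-((n + 1 : ℕ) * σ))) :=
  sum_Icc_succ_top (by omega) _

lemma Mfun_le_Mfun_succ (hσ : 0 < σ) (n : ℕ) :
    Mfun a n σ ≤ Mfun a (n + 1) σ := by
  have hx : 0 < ((n + 1 : ℕ) : ℝ) * σ := by positivity
  rw [Mfun_succ, le_add_iff_nonneg_right]
  have := one_sub_exp_neg_pos hx
  positivity

end Mfun

/-- Read with `δ = max (σ - log y) 0`: the equation `M_n(σ) = n` forces `e^{n δ / 2} ≳ n^r`. -/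
lemma mul_rpow_mul_exp_neg_le {a : ℕ → ℕ} {r y D₁ σ δ : ℝ} {n : ℕ} (hr : 0 ≤ r) (hy : 0 < y)
    (hD₁ : 0 < D₁) (ha : ∀ j : ℕ, 1 ≤ j → D₁ * (j : ℝ) ^ (r - 1) * y ^ j ≤ a j) (hn : 4 ≤ n)
    (hσ : 0 < σ) (hM : Mfun a n σ = n) (hδ : 0 ≤ δ) (hσδ : σ - log y ≤ δ) :
    D₁ * (n : ℝ) ^ r * exp (-(n * δ / 2)) ≤ 8 ^ (r + 1) := by
  have hn0 : (0 : ℝ) < n := by positivity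
  have key : D₁ * (((n : ℝ) / 8) ^ (r + 1) * exp (-(n * δ / 2))) ≤ n :=
    calc _ ≤ D₁ * powExpSum r n δ := by gcongr; exact powExpSum_ge_of_four_le hr hδ hn
      _ ≤ D₁ * powExpSum r n (σ - log y) := by gcongr; exact powExpSum_antitone r n hσδ
      _ ≤ n := hM ▸ Mfun_ge_mul_powExpSum hy hσ ha n
  rw [div_rpow hn0.le (by norm_num), rpow_add_one hn0.ne'] at key
  rw [← div_le_one (by positivity)]
  refine le_of_mul_le_mul_right ?_ hn0
  calc _ = D₁ * ((n : ℝ) ^ r * n / 8 ^ (r + 1) * exp (-(n * δ / 2))) := by ring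
    _ ≤ 1 * n := by linarith

section Sequence

variable {a : ℕ → ℕ} {r y : ℝ} {σ : ℕ → ℝ}

lemma tendsto_natCast_rpow_atTop (hr : 0 < r) : Tendsto (fun n : ℕ ↦ (n : ℝ) ^ r) atTop atTop :=
  (tendsto_rpow_atTop hr).comp tendsto_natCast_atTop_atTop

lemma eventually_sigma_sub_log_pos (hr : 0 < r) (hy : 0 < y) (hexp : ExpansiveCond a r y)
    (hσ : ∀ n : ℕ, 1 ≤ n → 0 < σ n ∧ Mfun a n (σ n) = n) :
    ∀ᶠ n in atTop, 0 < σ n - log y := by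
  obtain ⟨D₁, _, hD₁, -, hD⟩ := hexp
  filter_upwards [eventually_ge_atTop 4,
    (tendsto_natCast_rpow_atTop hr).eventually_gt_atTop (8 ^ (r + 1) / D₁)] with n hn hnr
  obtain ⟨hσn, hM⟩ := hσ n (by omega)
  by_contra! hδ
  have := mul_rpow_mul_exp_neg_le hr.le hy hD₁ (fun j hj ↦ (hD j hj).1) hn hσn hM le_rfl hδ
  rw [div_lt_iff₀' hD₁] at hnr
  simp only [mul_zero, zero_div, neg_zero, exp_zero, mul_one] at this
  linarith

lemma eventually_sigma_sub_log_le_one (hy : 1 ≤ y) (hexp : ExpansiveCond a r y)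
    (hσ : ∀ n : ℕ, 1 ≤ n → 0 < σ n ∧ Mfun a n (σ n) = n) :
    ∀ᶠ n in atTop, σ n - log y ≤ 1 := by
  obtain ⟨_, D₂, -, hD₂, hD⟩ := hexp
  obtain ⟨K, hK⟩ := bddAbove_range_powExpSum_one r
  filter_upwards [eventually_ge_atTop 1,
    tendsto_natCast_atTop_atTop.eventually_gt_atTop (2 * D₂ * K)] with n hn hnK
  obtain ⟨-, hM⟩ := hσ n hn
  by_contra! hδ
  have h2 : 1 + 1 / (σ n - log y) ≤ 2 := by
    linarith [(div_le_one (by linarith)).mpr hδ.le]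
  have : (n : ℝ) ≤ 2 * D₂ * K :=
    calc (n : ℝ) = Mfun a n (σ n) := hM.symm
      _ ≤ D₂ * (1 + 1 / (σ n - log y)) * powExpSum r n (σ n - log y) :=
        Mfun_le_mul_powExpSum hD₂.le hy (by linarith) (fun j hj ↦ (hD j hj).2) n
      _ ≤ D₂ * 2 * K := by
        gcongr
        · exact (sum_nonneg fun j _ ↦ by positivity)
        · exact (powExpSum_antitone r n hδ.le).trans (hK ⟨n, rfl⟩)
      _ = 2 * D₂ * K := by ring
  linarith

lemma eventually_four_le_mul_sigma_sub_log (hr : 0 < r) (hy : 0 < y)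
    (hexp : ExpansiveCond a r y) (hσ : ∀ n : ℕ, 1 ≤ n → 0 < σ n ∧ Mfun a n (σ n) = n) :
    ∀ᶠ n in atTop, 4 ≤ n * (σ n - log y) := by
  have hpos := eventually_sigma_sub_log_pos hr hy hexp hσ
  obtain ⟨D₁, _, hD₁, -, hD⟩ := hexp
  filter_upwards [eventually_ge_atTop 4, hpos,
    (tendsto_natCast_rpow_atTop hr).eventually_ge_atTop (exp 2 * 8 ^ (r + 1) / D₁)]
    with n hn hδ hnr
  obtain ⟨hσn, hM⟩ := hσ n (by omega)
  have hle := mul_rpow_mul_exp_neg_le hr.le hy hD₁ (fun j hj ↦ (hD j hj).1) hn hσn hM hδ.le le_rfl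
  rw [div_le_iff₀' hD₁] at hnr
  have h8 : (0 : ℝ) < 8 ^ (r + 1) := by positivity
  have : exp 2 * exp (-(n * (σ n - log y) / 2)) ≤ 1 := by
    nlinarith [mul_le_mul_of_nonneg_right hnr (exp_pos (-(n * (σ n - log y) / 2))).le]
  rw [← exp_add, exp_le_one_iff] at this
  linarith

/-- The new term of `M_{n+1}(σ_n)` is `O(n^r e^{-n δ_n}) = O(n^{-r})`, because
`n^r e^{-n δ_n / 2}` is bounded. -/
lemma eventually_Mfun_succ_le (hr : 0 < r) (hy : 1 ≤ y) (hexp : ExpansiveCond a r y)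
    (hσ : ∀ n : ℕ, 1 ≤ n → 0 < σ n ∧ Mfun a n (σ n) = n) :
    ∀ᶠ n in atTop, Mfun a (n + 1) (σ n) ≤ n + 1 := by
  have hy0 : 0 < y := by linarith
  have hpos := eventually_sigma_sub_log_pos hr hy0 hexp hσ
  have hfour := eventually_four_le_mul_sigma_sub_log hr hy0 hexp hσ
  obtain ⟨D₁, D₂, hD₁, hD₂, hD⟩ := hexp
  set L : ℝ := 8 ^ (r + 1)
  filter_upwards [eventually_ge_atTop 4, hpos, hfour,
    (tendsto_natCast_rpow_atTop hr).eventually_ge_atTop (2 ^ (r + 1) * D₂ * L ^ 2 / D₁ ^ 2)]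
    with n hn hδ h4 hnr
  obtain ⟨hσn, hM⟩ := hσ n (by omega)
  set δ := σ n - log y
  set P := (n : ℝ) ^ r
  set E := exp (-(n * δ / 2))
  have hPE : D₁ * P * E ≤ L :=
    mul_rpow_mul_exp_neg_le hr.le hy0 hD₁ (fun j hj ↦ (hD j hj).1) hn hσn hM hδ.le le_rfl
  rw [div_le_iff₀ (by positivity)] at hnr
  have hsmall : 2 ^ (r + 1) * D₂ * P * E ^ 2 ≤ 1 := by
    refine le_of_mul_le_mul_right ?_ (by positivity : 0 < L ^ 2)
    calc 2 ^ (r + 1) * D₂ * P * E ^ 2 * L ^ 2 = 2 ^ (r + 1) * D₂ * L ^ 2 * P * E ^ 2 := by ring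
      _ ≤ P * D₁ ^ 2 * P * E ^ 2 := by gcongr
      _ = (D₁ * P * E) ^ 2 := by ring
      _ ≤ L ^ 2 := by gcongr
      _ = 1 * L ^ 2 := by ring
  have hnew := Mfun_term_succ_le hr.le hD₂.le hy (by omega) hδ (by linarith)
    (hD (n + 1) (by omega)).2
  rw [Mfun_succ, hM]
  linarith

lemma eventually_sigma_succ_le (hr : 0 < r) (hy : 1 ≤ y) (hexp : ExpansiveCond a r y)
    (hσ : ∀ n : ℕ, 1 ≤ n → 0 < σ n ∧ Mfun a n (σ n) = n) :
    ∀ᶠ n in atTop, σ (n + 1) ≤ σ n := by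
  have ha : 0 < a 1 := by
    obtain ⟨D₁, _, hD₁, -, hD⟩ := hexp
    have := (hD 1 le_rfl).1
    simp only [Nat.cast_one, one_rpow, mul_one, pow_one] at this
    exact_mod_cast (by positivity : 0 < D₁ * y).trans_le this
  filter_upwards [eventually_ge_atTop 1, eventually_Mfun_succ_le hr hy hexp hσ] with n hn hle
  obtain ⟨hσn, -⟩ := hσ n hn
  obtain ⟨hσn1, hM⟩ := hσ (n + 1) (by omega)
  refine ((Mfun_strictAntiOn (n := n + 1) ha (by omega)).le_iff_ge hσn hσn1).mp ?_
  rw [hM]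
  exact_mod_cast hle

lemma exists_sigma_sub_sigma_succ_le (hr : 0 < r) (hy : 1 ≤ y) (hexp : ExpansiveCond a r y)
    (hσ : ∀ n : ℕ, 1 ≤ n → 0 < σ n ∧ Mfun a n (σ n) = n) :
    ∃ C > 0, ∀ᶠ n in atTop, σ n - σ (n + 1) ≤ C * (σ n - log y) ^ (r + 2) := by
  have hy0 : 0 < y := by linarith
  have hpos := eventually_sigma_sub_log_pos hr hy0 hexp hσ
  have hle := eventually_sigma_sub_log_le_one hy hexp hσ
  have hfour := eventually_four_le_mul_sigma_sub_log hr hy0 hexp hσ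
  have hmono := eventually_sigma_succ_le hr hy hexp hσ
  obtain ⟨D₁, _, hD₁, -, hD⟩ := hexp
  refine ⟨exp 4 / D₁, by positivity, ?_⟩
  filter_upwards [eventually_ge_atTop 1, hpos, hle, hfour, hmono] with n hn hδ hδ1 h4 hσσ
  obtain ⟨hσn, hM⟩ := hσ n hn
  obtain ⟨hσn1, hM1⟩ := hσ (n + 1) (by omega)
  set δ := σ n - log y
  set S := ∑ j ∈ Icc 1 n, (j : ℝ) ^ 2 * a j * exp (-(j * σ n))
  have hdiff : (σ n - σ (n + 1)) * S ≤ 1 :=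
    calc _ ≤ Mfun a n (σ (n + 1)) - Mfun a n (σ n) := sub_mul_sum_sq_le_Mfun_sub hσn1 hσσ n
      _ ≤ 1 := by
        have := Mfun_le_Mfun_succ (a := a) hσn1 n
        push_cast at hM1
        linarith
  have hS : exp (-4) * D₁ ≤ δ ^ (r + 2) * S :=
    calc exp (-4) * D₁ ≤ δ ^ (r + 1 + 1) * powExpSum (r + 1) n δ * D₁ := by
          gcongr
          exact powExpSum_ge_of_four_le_mul (by linarith) hδ hδ1 h4
      _ ≤ δ ^ (r + 2) * S := by
          rw [show r + 1 + 1 = r + 2 by ring, mul_assoc, mul_comm _ D₁]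
          gcongr
          exact powExpSum_le_sum_sq_mul hy0 (fun j hj ↦ (hD j hj).1) n
  have hg : 0 ≤ σ n - σ (n + 1) := sub_nonneg.mpr hσσ
  calc σ n - σ (n + 1) = exp 4 / D₁ * ((σ n - σ (n + 1)) * (exp (-4) * D₁)) := by
        rw [exp_neg]; field_simp
    _ ≤ exp 4 / D₁ * ((σ n - σ (n + 1)) * (δ ^ (r + 2) * S)) := by gcongr
    _ ≤ exp 4 / D₁ * δ ^ (r + 2) := by
        gcongr
        nlinarith [rpow_pos_of_pos hδ (r + 2)]

end Sequence

/-- under condition (exp), there exist a constant `C > 0` and `N` such that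
`0 ≤ σ_n - σ_{n+1} ≤ C δ_n^{r+2}` for all `n ≥ N`, where `δ_n = σ_n - log y`. -/
theorem sigma_difference_bound (a : ℕ → ℕ) (r y : ℝ) (hr : 0 < r) (hy : 1 ≤ y)
    (hexp : ExpansiveCond a r y)
    (σ : ℕ → ℝ) (hσ : ∀ n : ℕ, 1 ≤ n → 0 < σ n ∧ Mfun a n (σ n) = n) :
    ∃ C : ℝ, 0 < C ∧ ∃ N : ℕ, ∀ n ≥ N,
      0 ≤ σ n - σ (n + 1) ∧
      σ n - σ (n + 1) ≤ C * (σ n - Real.log y) ^ (r + 2) := by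
  obtain ⟨C, hC, hbound⟩ := exists_sigma_sub_sigma_succ_le hr hy hexp hσ
  obtain ⟨N, hN⟩ := eventually_atTop.mp
    ((eventually_sigma_succ_le hr hy hexp hσ).and hbound)
  exact ⟨C, hC, N, fun n hn ↦ ⟨sub_nonneg.mpr (hN n hn).1, (hN n hn).2⟩⟩
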